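/- arXiv:2005.08611 — 4 statements merged into one kernel-verified Lean document; each statement's English description precedes it below -/
import Mathlib

section
/- Let (𝒵, μ) be a σ-finite measure space, let N ⊆ ℝ^d be open, and let f : ℝ^d × 𝒵 → [0,∞) be measurable such that for μ-a.e. z the map α ↦ f(α,z) is continuous on N. Let η₀ be a measure on ℝ^d with η₀(U) > 0 for every nonempty open U ⊆ N, and fix α_r ∈ N. Then there is no pair (s, c) of a measurable s : 𝒵 → ℝ satisfying the dominance condition on N (for every α ∈ N there is an open neighborhood Γ ⊆ N with z ↦ sup_{β∈Γ} f(β,z) measurable and ∫ |s(z)| sup_{β∈Γ} f(β,z) dμ(z) < ∞) and a constant c ∈ ℝ such that 1(α ≤ α_r) − c = ∫ s(z) f(α,z) dμ(z) for η₀-a.e. α ∈ N, where α ≤ α_r means componentwise inequality. -/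
/-!
Under the dominance condition the map `α ↦ ∫ s z * f α z ∂μ` is continuous on `N`. Since `η₀`
charges every open subset of `N`, a continuous function that equals a constant `η₀`-a.e. on an
open set `U ⊆ N` equals it on all of `closure U`. The point `α_r` is a limit both of points of `N`
with all coordinates `< α_r` (where the indicator is `1`) and of points whose first coordinate
exceeds that of `α_r` (where it is `0`), so `1 - c = 0 - c`.
-/

open MeasureTheory Set Filter Topology
open scoped ENNReal

section ParametricIntegral

variable {X Z : Type*} [TopologicalSpace X] [FirstCountableTopology X] [MeasurableSpace Z]
  {μ : Measure Z}

theorem continuousAt_integral_mul_of_lintegral_iSup_lt_top {s : Z → ℝ} {f : X → Z → ℝ}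
    {x₀ : X} {Γ : Set X} (hs : Measurable s) (hf_meas : ∀ x, AEStronglyMeasurable (f x) μ)
    (hf_nonneg : ∀ x z, 0 ≤ f x z) (hΓ : Γ ∈ 𝓝 x₀)
    (hsup_meas : Measurable fun z => ⨆ x ∈ Γ, ENNReal.ofReal (f x z))
    (hfin : ∫⁻ z, (‖s z‖₊ : ℝ≥0∞) * ⨆ x ∈ Γ, ENNReal.ofReal (f x z) ∂μ < ⊤)
    (hf_cont : ∀ᵐ z ∂μ, ContinuousAt (fun x => f x z) x₀) :
    ContinuousAt (fun x => ∫ z, s z * f x z ∂μ) x₀ := by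
  set B : Z → ℝ≥0∞ := fun z => (‖s z‖₊ : ℝ≥0∞) * ⨆ x ∈ Γ, ENNReal.ofReal (f x z)
  have hB_meas : Measurable B := hs.nnnorm.coe_nnreal_ennreal.mul hsup_meas
  have hB_le : ∀ x ∈ Γ, ∀ z, ‖s z * f x z‖ₑ ≤ B z := fun x hx z => by
    rw [enorm_mul, ← ofReal_norm (f x z), Real.norm_of_nonneg (hf_nonneg x z),
      enorm_eq_nnnorm]
    exact mul_le_mul_right (le_biSup (fun x => ENNReal.ofReal (f x z)) hx) _
  refine continuousAt_of_dominated (bound := fun z => (B z).toReal)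
    (Eventually.of_forall fun x => (hs.aestronglyMeasurable.mul (hf_meas x)))
    ?_ (integrable_toReal_of_lintegral_ne_top hB_meas.aemeasurable hfin.ne)
    (hf_cont.mono fun z hz => continuousAt_const.mul hz)
  filter_upwards [hΓ] with x hx
  filter_upwards [ae_lt_top hB_meas hfin.ne] with z hz
  rw [← toReal_enorm]
  exact ENNReal.toReal_mono hz.ne (hB_le x hx z)

end ParametricIntegral

section OpenPositive

variable {X : Type*} [TopologicalSpace X] [MeasurableSpace X] {η : Measure X} {U : Set X}

theorem closure_subset_closure_setOf_of_ae (hU : IsOpen U)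
    (hη : ∀ V, IsOpen V → V.Nonempty → V ⊆ U → 0 < η V) {p : X → Prop}
    (hp : ∀ᵐ x ∂η, x ∈ U → p x) : closure U ⊆ closure {x | x ∈ U ∧ p x} := by
  refine closure_minimal (fun x hxU => mem_closure_iff.mpr fun o ho hxo => ?_) isClosed_closure
  by_contra hempty
  have hnull : η (o ∩ U) = 0 := measure_mono_null (t := {y | ¬(y ∈ U → p y)})
    (fun y hy hpy => hempty ⟨y, hy.1, hy.2, hpy hy.2⟩) (ae_iff.mp hp)
  exact (hη _ (ho.inter hU) ⟨x, hxo, hxU⟩ inter_subset_right).ne' hnull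

theorem ContinuousAt.eq_of_ae_eq_on {Y : Type*} [TopologicalSpace Y] [T1Space Y] {g : X → Y}
    {x : X} {a : Y} (hg : ContinuousAt g x) (hU : IsOpen U)
    (hη : ∀ V, IsOpen V → V.Nonempty → V ⊆ U → 0 < η V) (hx : x ∈ closure U)
    (hga : ∀ᵐ y ∂η, y ∈ U → g y = a) : g x = a := by
  have hx' := closure_subset_closure_setOf_of_ae hU hη hga hx
  have himage : g '' {y | y ∈ U ∧ g y = a} ⊆ {a} := by
    rintro _ ⟨y, ⟨-, hy⟩, rfl⟩
    exact hy
  simpa using closure_mono himage (hg.continuousWithinAt.mem_closure_image hx')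

end OpenPositive

theorem mem_closure_inter_of_forall_add_smul_mem {E : Type*} [TopologicalSpace E]
    [AddCommGroup E] [Module ℝ E] [ContinuousAdd E] [ContinuousSMul ℝ E] {N P : Set E} {x v : E}
    (hN : IsOpen N) (hx : x ∈ N) (hv : ∀ t : ℝ, 0 < t → x + t • v ∈ P) :
    x ∈ closure (N ∩ P) := by
  have hlim : Tendsto (fun t : ℝ => x + t • v) (𝓝[>] 0) (𝓝 x) := by
    have : Continuous fun t : ℝ => x + t • v := by fun_prop
    exact (this.tendsto' 0 x (by simp)).mono_left nhdsWithin_le_nhds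
  exact hN.inter_closure ⟨hx, mem_closure_of_tendsto hlim
    (eventually_nhdsWithin_of_forall hv)⟩

theorem stmt_1_general {d : ℕ} (hd : 0 < d) {Z : Type*} [MeasurableSpace Z]
    (μ : Measure Z)
    (N : Set (EuclideanSpace ℝ (Fin d))) (hN : IsOpen N)
    (f : EuclideanSpace ℝ (Fin d) → Z → ℝ)
    (hf_meas : Measurable (Function.uncurry f))
    (hf_nonneg : ∀ α z, 0 ≤ f α z)
    (hf_cont : ∀ᵐ z ∂μ, ContinuousOn (fun α => f α z) N)
    (η₀ : Measure (EuclideanSpace ℝ (Fin d)))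
    (hη : ∀ U : Set (EuclideanSpace ℝ (Fin d)), IsOpen U → U.Nonempty → U ⊆ N → 0 < η₀ U)
    (αr : EuclideanSpace ℝ (Fin d)) (hαr : αr ∈ N) :
    ¬ ∃ (s : Z → ℝ) (c : ℝ), Measurable s ∧
      (∀ α ∈ N, ∃ Γ : Set (EuclideanSpace ℝ (Fin d)),
        IsOpen Γ ∧ α ∈ Γ ∧ Γ ⊆ N ∧
        Measurable (fun z => ⨆ β ∈ Γ, ENNReal.ofReal (f β z)) ∧
        ∫⁻ z, (‖s z‖₊ : ℝ≥0∞) * ⨆ β ∈ Γ, ENNReal.ofReal (f β z) ∂μ < ⊤) ∧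
      (∀ᵐ α ∂η₀, α ∈ N →
        (if ∀ i, α i ≤ αr i then (1 : ℝ) else 0) - c = ∫ z, s z * f α z ∂μ) := by
  rintro ⟨s, c, hs, hdom, hae⟩
  obtain ⟨Γ, hΓ, hαrΓ, -, hsup_meas, hfin⟩ := hdom αr hαr
  have hg : ContinuousAt (fun α => ∫ z, s z * f α z ∂μ) αr :=
    continuousAt_integral_mul_of_lintegral_iSup_lt_top hs
      (fun α => (hf_meas.comp measurable_prodMk_left).aestronglyMeasurable) hf_nonneg
      (hΓ.mem_nhds hαrΓ) hsup_meas hfin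
      (hf_cont.mono fun z hz => hz.continuousAt (hN.mem_nhds hαr))
  have hηN {P} (hP : IsOpen P) := fun V hV hne (hVN : V ⊆ N ∩ P) =>
    hη V hV hne (hVN.trans inter_subset_left)
  have hbelow : ∫ z, s z * f αr z ∂μ = 1 - c := by
    have hlower_open : IsOpen {α : EuclideanSpace ℝ (Fin d) | ∀ i, α i < αr i} := by
      simp only [ofPred_forall]
      exact isOpen_iInter_of_finite fun i => isOpen_lt (by fun_prop) continuous_const
    refine hg.eq_of_ae_eq_on (hN.inter hlower_open) (hηN hlower_open)
      (mem_closure_inter_of_forall_add_smul_mem (v := WithLp.toLp 2 fun _ => -1) hN hαr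
        fun t ht i => by simpa using ht) ?_
    filter_upwards [hae] with α hα hαU
    rw [← hα hαU.1, if_pos fun i => (hαU.2 i).le]
  have habove : ∫ z, s z * f αr z ∂μ = 0 - c := by
    let i₀ : Fin d := ⟨0, hd⟩
    have hupper_open : IsOpen {α : EuclideanSpace ℝ (Fin d) | αr i₀ < α i₀} :=
      isOpen_lt continuous_const (by fun_prop)
    refine hg.eq_of_ae_eq_on (hN.inter hupper_open) (hηN hupper_open)
      (mem_closure_inter_of_forall_add_smul_mem (v := EuclideanSpace.single i₀ 1) hN hαr
        fun t ht => by simpa using ht) ?_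
    filter_upwards [hae] with α hα hαU
    rw [← hα hαU.1, if_neg fun h => (h i₀).not_gt hαU.2]
  linarith

/-- irregularity of the CDF of nonparametric unobserved heterogeneity:
no influence function `s` satisfying the dominance condition can represent the
indicator `1(α ≤ α_r)` (up to a constant) as `∫ s z * f α z dμ` η₀-a.e. on `N`. -/
theorem stmt_1 {d : ℕ} (hd : 0 < d) {Z : Type*} [MeasurableSpace Z]
    (μ : Measure Z) [SigmaFinite μ]
    (N : Set (EuclideanSpace ℝ (Fin d))) (hN : IsOpen N)
    (f : EuclideanSpace ℝ (Fin d) → Z → ℝ)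
    (hf_meas : Measurable (Function.uncurry f))
    (hf_nonneg : ∀ α z, 0 ≤ f α z)
    (hf_cont : ∀ᵐ z ∂μ, ContinuousOn (fun α => f α z) N)
    (η₀ : Measure (EuclideanSpace ℝ (Fin d)))
    (hη : ∀ U : Set (EuclideanSpace ℝ (Fin d)), IsOpen U → U.Nonempty → U ⊆ N → 0 < η₀ U)
    (αr : EuclideanSpace ℝ (Fin d)) (hαr : αr ∈ N) :
    ¬ ∃ (s : Z → ℝ) (c : ℝ), Measurable s ∧
      (∀ α ∈ N, ∃ Γ : Set (EuclideanSpace ℝ (Fin d)),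
        IsOpen Γ ∧ α ∈ Γ ∧ Γ ⊆ N ∧
        Measurable (fun z => ⨆ β ∈ Γ, ENNReal.ofReal (f β z)) ∧
        ∫⁻ z, (‖s z‖₊ : ℝ≥0∞) * ⨆ β ∈ Γ, ENNReal.ofReal (f β z) ∂μ < ⊤) ∧
      (∀ᵐ α ∂η₀, α ∈ N →
        (if ∀ i, α i ≤ αr i then (1 : ℝ) else 0) - c = ∫ z, s z * f α z ∂μ) :=
  stmt_1_general hd μ N hN f hf_meas hf_nonneg hf_cont η₀ hη αr hαr
end

section
/- Let T ⊆ (0,∞) be convex with nonempty interior and define, for α = (α₁,α₂) ∈ ℝ × (0,∞) and (t₁,t₂) ∈ T², the density f_{z/α}(t₁,t₂) = α₂²(t₁t₂)^{−3/2} exp(−(α₁t₁ − α₂)²/(2t₁) − (α₁t₂ − α₂)²/(2t₂)). Let N ⊆ ℝ × (0,∞) be open, (α₁₀, α₂₀) ∈ N, and let η₀ be a measure on ℝ × (0,∞) with η₀(U) > 0 for every nonempty open U ⊆ N. Then there is no pair (s, c) of a measurable s : T² → ℝ satisfying the dominance condition on N (for every α ∈ N there is an open neighborhood Γ ⊆ N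 with ∫_{T²} |s(t₁,t₂)| sup_{β∈Γ} f_{z/β}(t₁,t₂) dt₁dt₂ < ∞) and a constant c ∈ ℝ such that 1(α₁ ≤ α₁₀)1(α₂ ≤ α₂₀) − c = ∫_{T²} s(t₁,t₂) f_{z/α}(t₁,t₂) dt₁dt₂ for η₀-a.e. α ∈ N. -/
/-!
The identity forces `α ↦ ∫ s f_{z/α}` to agree, on a set of `η₀`-positive measure in every
neighbourhood of `α₀ = (α₁₀, α₂₀)`, with `1 - c` on the open quadrant below `α₀` and with `-c`
on the open half-plane to its right. The dominance condition makes this integral continuous at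
`α₀` (dominated convergence, the dominating function being measurable because the supremum over
`Γ` of the continuous family `β ↦ f_{z/β}` can be taken over a countable dense subset). Both
values would then be the integral at `α₀`, which is absurd.
-/

open MeasureTheory Set Real Filter Topology
open scoped ENNReal

noncomputable def twoSpellDensity (α t : ℝ × ℝ) : ℝ :=
  α.2 ^ 2 * ((t.1 * t.2) ^ (-(3 : ℝ) / 2)) *
    Real.exp (-(α.1 * t.1 - α.2) ^ 2 / (2 * t.1) - (α.1 * t.2 - α.2) ^ 2 / (2 * t.2))

theorem measurable_twoSpellDensity (α : ℝ × ℝ) : Measurable (twoSpellDensity α) := by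
  unfold twoSpellDensity; fun_prop

theorem continuous_twoSpellDensity_apply (t : ℝ × ℝ) : Continuous (twoSpellDensity · t) := by
  unfold twoSpellDensity; fun_prop

theorem twoSpellDensity_nonneg (α : ℝ × ℝ) {t : ℝ × ℝ} (ht₁ : 0 < t.1) (ht₂ : 0 < t.2) :
    0 ≤ twoSpellDensity α t := by
  unfold twoSpellDensity
  have := rpow_pos_of_pos (mul_pos ht₁ ht₂) (-(3 : ℝ) / 2)
  positivity

theorem measurable_biSup_of_continuous {X Y : Type*} [TopologicalSpace X]
    [SecondCountableTopology X] [MeasurableSpace Y] {f : X → Y → ℝ≥0∞}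
    (hf_cont : ∀ y, Continuous (f · y)) (hf_meas : ∀ x, Measurable (f x)) (Γ : Set X) :
    Measurable fun y => ⨆ x ∈ Γ, f x y := by
  obtain ⟨D, hD_countable, hD_dense⟩ := TopologicalSpace.exists_countable_dense Γ
  have : Countable D := hD_countable.to_subtype
  have hsup : ∀ y, ⨆ x ∈ Γ, f x y = ⨆ x : D, f x y := fun y => by
    rw [iSup_subtype']
    exact (hD_dense.ciSup' ((hf_cont y).comp continuous_subtype_val)).symm
  simp_rw [hsup]
  exact .iSup fun x => hf_meas x

theorem continuousAt_integral_mul_of_lintegral_biSup_lt_top {X Y : Type*} [TopologicalSpace X]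
    [SecondCountableTopology X] [MeasurableSpace Y] {μ : Measure Y} {f : X → Y → ℝ}
    (hf_cont : ∀ y, Continuous (f · y)) (hf_meas : ∀ x, Measurable (f x))
    (hf_nonneg : ∀ᵐ y ∂μ, ∀ x, 0 ≤ f x y) {s : Y → ℝ} (hs : AEStronglyMeasurable s μ)
    {Γ : Set X} (hΓ : IsOpen Γ) {x₀ : X} (hx₀ : x₀ ∈ Γ)
    (hdom : ∫⁻ y, ‖s y‖ₑ * ⨆ x ∈ Γ, ENNReal.ofReal (f x y) ∂μ < ⊤) :
    ContinuousAt (fun x => ∫ y, s y * f x y ∂μ) x₀ := by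
  set bound : Y → ℝ≥0∞ := fun y => ‖s y‖ₑ * ⨆ x ∈ Γ, ENNReal.ofReal (f x y)
  have hbound_meas : AEMeasurable bound μ :=
    hs.enorm.mul (measurable_biSup_of_continuous
      (fun y => ENNReal.continuous_ofReal.comp (hf_cont y))
      (fun x => (hf_meas x).ennreal_ofReal) Γ).aemeasurable
  refine continuousAt_of_dominated (bound := fun y => (bound y).toReal)
    (.of_forall fun x => hs.mul (hf_meas x).aestronglyMeasurable) ?_
    (integrable_toReal_of_lintegral_ne_top hbound_meas hdom.ne)
    (.of_forall fun y => (continuous_const.mul (hf_cont y)).continuousAt)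
  filter_upwards [hΓ.mem_nhds hx₀] with x hx
  filter_upwards [ae_lt_top' hbound_meas hdom.ne, hf_nonneg] with y hy_fin hy_nonneg
  have hle : ENNReal.ofReal (|s y| * f x y) ≤ bound y := by
    rw [ENNReal.ofReal_mul (abs_nonneg _), ← Real.enorm_eq_ofReal_abs]
    exact mul_le_mul_right (le_iSup₂ (f := fun x _ => ENNReal.ofReal (f x y)) x hx) _
  rw [norm_mul, Real.norm_eq_abs, Real.norm_of_nonneg (hy_nonneg x)]
  exact (ENNReal.ofReal_le_iff_le_toReal hy_fin.ne).mp hle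

theorem frequently_mem_and_of_ae {X : Type*} [TopologicalSpace X] [MeasurableSpace X]
    {η : Measure X} {N A : Set X} {p : X → Prop} (hN : IsOpen N) (hA : IsOpen A)
    (hη : ∀ U : Set X, IsOpen U → U.Nonempty → U ⊆ N → 0 < η U) (hp : ∀ᵐ x ∂η, x ∈ N → p x)
    {x₀ : X} (hx₀N : x₀ ∈ N) (hx₀A : x₀ ∈ closure A) :
    ∃ᶠ x in 𝓝 x₀, x ∈ A ∧ p x := by
  refine frequently_iff.2 fun {U} hU => ?_
  obtain ⟨V, hVU, hV, hx₀V⟩ := mem_nhds_iff.1 (inter_mem hU (hN.mem_nhds hx₀N))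
  have hVA_pos := hη (V ∩ A) (hV.inter hA) (mem_closure_iff.1 hx₀A V hV hx₀V)
    fun x hx => (hVU hx.1).2
  obtain ⟨x, ⟨hxV, hxA⟩, hpx⟩ := η.exists_mem_of_measure_ne_zero_of_ae hVA_pos.ne'
    (ae_restrict_of_ae hp)
  exact ⟨x, (hVU hxV).1, hxA, hpx ((hVU hxV).2)⟩

theorem ContinuousAt.eq_of_ae_eq_of_eqOn_const {X Z : Type*} [TopologicalSpace X]
    [MeasurableSpace X] [TopologicalSpace Z] [T2Space Z] {η : Measure X} {N A : Set X}
    {F g : X → Z} {v : Z} {x₀ : X} (hF : ContinuousAt F x₀) (hN : IsOpen N) (hA : IsOpen A)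
    (hη : ∀ U : Set X, IsOpen U → U.Nonempty → U ⊆ N → 0 < η U)
    (hFg : ∀ᵐ x ∂η, x ∈ N → g x = F x) (hg : EqOn g (fun _ => v) A)
    (hx₀N : x₀ ∈ N) (hx₀A : x₀ ∈ closure A) :
    F x₀ = v :=
  tendsto_nhds_unique_of_frequently_eq hF.tendsto tendsto_const_nhds <|
    (frequently_mem_and_of_ae hN hA hη hFg hx₀N hx₀A).mono fun _ ⟨hxA, hgF⟩ => hgF ▸ hg hxA

theorem stmt_5_general (T : Set ℝ) (hT : T ⊆ Set.Ioi 0) (hTconv : Convex ℝ T)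
    (N : Set (ℝ × ℝ)) (hN : IsOpen N)
    (α₁₀ α₂₀ : ℝ) (hα : (α₁₀, α₂₀) ∈ N)
    (η₀ : Measure (ℝ × ℝ))
    (hη : ∀ U : Set (ℝ × ℝ), IsOpen U → U.Nonempty → U ⊆ N → 0 < η₀ U) :
    ¬ ∃ (s : ℝ → ℝ → ℝ) (c : ℝ), Measurable (Function.uncurry s) ∧
      (∀ α ∈ N, ∃ Γ : Set (ℝ × ℝ), IsOpen Γ ∧ α ∈ Γ ∧ Γ ⊆ N ∧
        ∫⁻ t in T ×ˢ T, (‖s t.1 t.2‖₊ : ℝ≥0∞) *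
          ⨆ β ∈ Γ, ENNReal.ofReal (β.2 ^ 2 * ((t.1 * t.2) ^ (-(3 : ℝ) / 2)) *
            Real.exp (-(β.1 * t.1 - β.2) ^ 2 / (2 * t.1) -
              (β.1 * t.2 - β.2) ^ 2 / (2 * t.2))) ∂volume < ⊤) ∧
      (∀ᵐ α ∂η₀, α ∈ N →
        (if α.1 ≤ α₁₀ then (1 : ℝ) else 0) * (if α.2 ≤ α₂₀ then (1 : ℝ) else 0) - c =
          ∫ t in T ×ˢ T, s t.1 t.2 *
            (α.2 ^ 2 * ((t.1 * t.2) ^ (-(3 : ℝ) / 2)) *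
              Real.exp (-(α.1 * t.1 - α.2) ^ 2 / (2 * t.1) -
                (α.1 * t.2 - α.2) ^ 2 / (2 * t.2)))) := by
  rintro ⟨s, c, hs, hdom, hae⟩
  have hTT : MeasurableSet (T ×ˢ T) := hTconv.ordConnected.measurableSet.prod
    hTconv.ordConnected.measurableSet
  obtain ⟨Γ, hΓ, hαΓ, -, hΓdom⟩ := hdom (α₁₀, α₂₀) hα
  have hF : ContinuousAt (fun α => ∫ t in T ×ˢ T, s t.1 t.2 * twoSpellDensity α t) (α₁₀, α₂₀) :=
    continuousAt_integral_mul_of_lintegral_biSup_lt_top continuous_twoSpellDensity_apply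
      measurable_twoSpellDensity
      (ae_restrict_of_forall_mem hTT fun t ht α => twoSpellDensity_nonneg α (hT ht.1) (hT ht.2))
      hs.aestronglyMeasurable hΓ hαΓ hΓdom
  have h_lower := hF.eq_of_ae_eq_of_eqOn_const (A := Iio α₁₀ ×ˢ Iio α₂₀) (v := 1 * 1 - c) hN
    (isOpen_Iio.prod isOpen_Iio) hη hae
    (fun α ⟨h₁, h₂⟩ => by simp [(mem_Iio.1 h₁).le, (mem_Iio.1 h₂).le]) hα
    (by simp [closure_prod_eq])
  have h_right := hF.eq_of_ae_eq_of_eqOn_const (A := Ioi α₁₀ ×ˢ univ) (v := 0 * 1 - c) hN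
    (isOpen_Ioi.prod isOpen_univ) hη hae
    (fun α ⟨h₁, _⟩ => by simp [not_le.2 (mem_Ioi.1 h₁)]) hα
    (by simp [closure_prod_eq])
  linarith

/-- irregular identification of the CDF of unobserved heterogeneity in the
Alvarez–Borovičková–Shimer structural unemployment model: the necessary representation
`1(α₁ ≤ α₁₀)1(α₂ ≤ α₂₀) − c = ∫_{T²} s · f_{z/α}` (with the dominance condition) fails. -/
theorem stmt_5 (T : Set ℝ) (hT : T ⊆ Set.Ioi 0) (hTconv : Convex ℝ T)
    (hTint : (interior T).Nonempty)
    (N : Set (ℝ × ℝ)) (hN : IsOpen N) (hNsub : N ⊆ Set.univ ×ˢ Set.Ioi 0)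
    (α₁₀ α₂₀ : ℝ) (hα : (α₁₀, α₂₀) ∈ N)
    (η₀ : Measure (ℝ × ℝ))
    (hη : ∀ U : Set (ℝ × ℝ), IsOpen U → U.Nonempty → U ⊆ N → 0 < η₀ U) :
    ¬ ∃ (s : ℝ → ℝ → ℝ) (c : ℝ), Measurable (Function.uncurry s) ∧
      (∀ α ∈ N, ∃ Γ : Set (ℝ × ℝ), IsOpen Γ ∧ α ∈ Γ ∧ Γ ⊆ N ∧
        ∫⁻ t in T ×ˢ T, (‖s t.1 t.2‖₊ : ℝ≥0∞) *
          ⨆ β ∈ Γ, ENNReal.ofReal (β.2 ^ 2 * ((t.1 * t.2) ^ (-(3 : ℝ) / 2)) *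
            Real.exp (-(β.1 * t.1 - β.2) ^ 2 / (2 * t.1) -
              (β.1 * t.2 - β.2) ^ 2 / (2 * t.2))) ∂volume < ⊤) ∧
      (∀ᵐ α ∂η₀, α ∈ N →
        (if α.1 ≤ α₁₀ then (1 : ℝ) else 0) * (if α.2 ≤ α₂₀ then (1 : ℝ) else 0) - c =
          ∫ t in T ×ˢ T, s t.1 t.2 *
            (α.2 ^ 2 * ((t.1 * t.2) ^ (-(3 : ℝ) / 2)) *
              Real.exp (-(α.1 * t.1 - α.2) ^ 2 / (2 * t.1) -
                (α.1 * t.2 - α.2) ^ 2 / (2 * t.2)))) :=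
  stmt_5_general T hT hTconv N hN α₁₀ α₂₀ hα η₀ hη
end

section
/- Let d ≥ 2, let σ be the rotation-invariant (uniform spherical) probability measure on the unit sphere S^{d−1} ⊆ ℝ^d, let ν be a finite measure on S^{d−1} that is absolutely continuous with respect to σ, and let s ∈ L¹(ν). Then the map b(α) = ∫_{S^{d−1}} 1(⟨x,α⟩ ≥ 0) s(x) dν(x) is continuous on S^{d−1}, and hence uniformly continuous by compactness of S^{d−1}. -/
/-!
All hyperplanes through the origin have the same `σ`-measure `c`, since the isometry group acts
transitively on their normal directions. The hyperplanes orthogonal to the points of the moment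
curve `t ↦ (1, t, …, t ^ (d - 1))` cover each `x ≠ 0` fewer than `d` times, because `⟪x, _⟫`
is a nonzero polynomial of degree `< d` along the curve; integrating the multiplicity gives
`N * c ≤ d` for every `N`, so `c = 0`. Hence `ν` charges no hyperplane `α₀ᗮ`, the integrand is
`ν`-a.e. locally constant in `α` near `α₀`, and dominated convergence gives continuity.
-/

open MeasureTheory Set Filter
open scoped RealInnerProductSpace

open Finset in
open Classical in
theorem MeasureTheory.sum_measure_le_mul_measure_univ_of_card_le {α ι : Type*}
    [MeasurableSpace α] {μ : Measure α} {s : ι → Set α} (I : Finset ι)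
    (hs : ∀ i ∈ I, MeasurableSet (s i)) {M : ℕ}
    (hM : ∀ᵐ x ∂μ, #{i ∈ I | x ∈ s i} ≤ M) :
    ∑ i ∈ I, μ (s i) ≤ M * μ univ := by
  calc ∑ i ∈ I, μ (s i) = ∫⁻ x, ∑ i ∈ I, (s i).indicator 1 x ∂μ := by
        rw [lintegral_finsetSum _ fun i hi => measurable_one.indicator (hs i hi)]
        exact Finset.sum_congr rfl fun i hi => (lintegral_indicator_one (hs i hi)).symm
    _ ≤ ∫⁻ _, (M : ENNReal) ∂μ := by
        refine lintegral_mono_ae (hM.mono fun x hx => ?_)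
        simp only [Set.indicator_apply, Pi.one_apply, Finset.sum_boole]
        exact_mod_cast hx
    _ = M * μ univ := lintegral_const _

open Finset in
open Classical in
theorem MeasureTheory.measure_eq_zero_of_card_le {α ι : Type*} [Infinite ι]
    [MeasurableSpace α] {μ : Measure α} [IsFiniteMeasure μ] {s : ι → Set α}
    (hs : ∀ i, MeasurableSet (s i)) {c : ENNReal} (hc : ∀ i, μ (s i) = c) {M : ℕ}
    (hM : ∀ᵐ x ∂μ, ∀ I : Finset ι, #{i ∈ I | x ∈ s i} ≤ M) : c = 0 := by
  by_contra hc0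
  obtain ⟨N, hN⟩ := ENNReal.exists_nat_mul_gt hc0 (by finiteness : (M : ENNReal) * μ univ ≠ ⊤)
  obtain ⟨I, hI⟩ := Infinite.exists_subset_card_eq ι N
  have := sum_measure_le_mul_measure_univ_of_card_le I (fun i _ => hs i)
    (hM.mono fun x hx => hx I)
  simp only [hc, Finset.sum_const, hI, nsmul_eq_mul] at this
  exact (hN.trans_le this).false

section hyperplane

variable {E : Type*} [NormedAddCommGroup E] [InnerProductSpace ℝ E]

theorem setOf_inner_smul_eq_zero (α : E) {c : ℝ} (hc : c ≠ 0) :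
    {x : E | ⟪x, c • α⟫ = 0} = {x | ⟪x, α⟫ = 0} := by
  ext x; simp [inner_smul_right, hc]

theorem measurableSet_setOf_inner_eq_zero [MeasurableSpace E] [BorelSpace E] (α : E) :
    MeasurableSet {x : E | ⟪x, α⟫ = 0} :=
  (isClosed_eq (continuous_id.inner continuous_const) continuous_const).measurableSet

variable [MeasurableSpace E] [BorelSpace E] {μ : Measure E}

theorem measure_setOf_inner_eq_zero_eq_of_norm_eq (hμ : ∀ R : E ≃ₗᵢ[ℝ] E, μ.map R = μ)
    {α β : E} (hαβ : ‖α‖ = ‖β‖) : μ {x | ⟪x, α⟫ = 0} = μ {x | ⟪x, β⟫ = 0} := by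
  set R := Submodule.reflection (ℝ ∙ (α - β))ᗮ
  have hpre : R ⁻¹' {x | ⟪x, β⟫ = 0} = {x | ⟪x, α⟫ = 0} := by
    ext x
    change ⟪R x, β⟫ = 0 ↔ ⟪x, α⟫ = 0
    rw [← Submodule.reflection_sub hαβ, LinearIsometryEquiv.inner_map_map]
  rw [← hpre, ← Measure.map_apply R.continuous.measurable
    (measurableSet_setOf_inner_eq_zero β), hμ R]

theorem measure_setOf_inner_eq_zero_eq (hμ : ∀ R : E ≃ₗᵢ[ℝ] E, μ.map R = μ)
    {α β : E} (hα : α ≠ 0) (hβ : β ≠ 0) : μ {x | ⟪x, α⟫ = 0} = μ {x | ⟪x, β⟫ = 0} := by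
  rw [← setOf_inner_smul_eq_zero α (norm_ne_zero_iff.2 hβ),
    ← setOf_inner_smul_eq_zero β (norm_ne_zero_iff.2 hα)]
  exact measure_setOf_inner_eq_zero_eq_of_norm_eq hμ (by simp only [norm_smul, norm_norm, mul_comm])

end hyperplane

noncomputable def momentCurve (d : ℕ) (t : ℝ) : EuclideanSpace ℝ (Fin d) :=
  WithLp.toLp 2 fun i => t ^ (i : ℕ)

theorem momentCurve_ne_zero {d : ℕ} (hd : 0 < d) (t : ℝ) : momentCurve d t ≠ 0 := by
  intro h
  simpa [momentCurve] using congrArg (· ⟨0, hd⟩) h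

open Polynomial Finset in
theorem card_filter_inner_momentCurve_eq_zero_lt {d : ℕ} {x : EuclideanSpace ℝ (Fin d)}
    (hx : x ≠ 0) (T : Finset ℝ) : #{t ∈ T | ⟪x, momentCurve d t⟫ = 0} < d := by
  set p : ℝ[X] := ((degreeLTEquiv ℝ d).symm x.ofLp : ℝ[X])
  have hcoeff : ∀ i : Fin d, p.coeff i = x i := fun i =>
    congrFun ((degreeLTEquiv ℝ d).apply_symm_apply x.ofLp) i
  have hp : p ≠ 0 := by
    intro h
    refine hx (PiLp.ext fun i => ?_)
    rw [← hcoeff, h, coeff_zero, PiLp.zero_apply]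
  have hdeg : p.natDegree < d :=
    (natDegree_lt_iff_degree_lt hp).2 (mem_degreeLT.1 ((degreeLTEquiv ℝ d).symm x.ofLp).2)
  have heval : ∀ t, ⟪x, momentCurve d t⟫ = p.eval t := fun t => by
    simp only [momentCurve, PiLp.inner_apply, RCLike.inner_apply, conj_trivial,
      eval_eq_sum_range' hdeg, ← Fin.sum_univ_eq_sum_range, hcoeff, mul_comm]
  refine (card_le_degree_of_subset_roots fun t ht => ?_).trans_lt hdeg
  rw [Finset.filter_val, Multiset.mem_filter, heval] at ht
  exact (mem_roots hp).2 ht.2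

theorem measure_setOf_inner_eq_zero {d : ℕ} {μ : Measure (EuclideanSpace ℝ (Fin d))}
    [IsFiniteMeasure μ] (h0 : μ {0} = 0)
    (hμ : ∀ R : EuclideanSpace ℝ (Fin d) ≃ₗᵢ[ℝ] EuclideanSpace ℝ (Fin d), μ.map R = μ)
    {α : EuclideanSpace ℝ (Fin d)} (hα : α ≠ 0) : μ {x | ⟪x, α⟫ = 0} = 0 := by
  have hd : 0 < d := Nat.pos_of_ne_zero fun hd => by subst hd; exact hα (Subsingleton.elim _ _)
  refine measure_eq_zero_of_card_le (fun t => measurableSet_setOf_inner_eq_zero _)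
    (fun t => measure_setOf_inner_eq_zero_eq hμ (momentCurve_ne_zero hd t) hα) (M := d) ?_
  filter_upwards [measure_eq_zero_iff_ae_notMem.1 h0] with x hx I
  exact (card_filter_inner_momentCurve_eq_zero_lt hx I).le

section halfspace

variable {E : Type*} [NormedAddCommGroup E] [InnerProductSpace ℝ E]

theorem continuousAt_ite_inner_nonneg {F : Type*} [TopologicalSpace F] [Zero F] {x α₀ : E}
    (hx : ⟪x, α₀⟫ ≠ 0) (y : F) : ContinuousAt (fun α => if 0 ≤ ⟪x, α⟫ then y else 0) α₀ := by
  have hfr : α₀ ∉ frontier {α | 0 ≤ ⟪x, α⟫} := fun h =>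
    hx (frontier_le_subset_eq continuous_const (continuous_const.inner continuous_id) h).symm
  convert continuousOn_const.continuousAt_indicator (f := fun _ => y) hfr using 1
  ext α
  simp [indicator_apply]

theorem continuousAt_integral_ite_inner_nonneg [MeasurableSpace E] [OpensMeasurableSpace E]
    {F : Type*} [NormedAddCommGroup F] [NormedSpace ℝ F] {ν : Measure E} {s : E → F}
    (hs : Integrable s ν) {α₀ : E} (hα₀ : ν {x | ⟪x, α₀⟫ = 0} = 0) :
    ContinuousAt (fun α => ∫ x, (if 0 ≤ ⟪x, α⟫ then s x else 0) ∂ν) α₀ := by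
  have hmeas (α : E) : AEStronglyMeasurable (fun x => if 0 ≤ ⟪x, α⟫ then s x else 0) ν := by
    have hS : MeasurableSet {x : E | 0 ≤ ⟪x, α⟫} :=
      (isClosed_le continuous_const (continuous_id.inner continuous_const)).measurableSet
    convert hs.aestronglyMeasurable.indicator hS using 1
    ext x
    simp [indicator_apply]
  refine continuousAt_of_dominated (Eventually.of_forall hmeas)
    (Eventually.of_forall fun α => ae_of_all ν fun x => ?_) hs.norm ?_
  · split_ifs <;> simp
  · filter_upwards [measure_eq_zero_iff_ae_notMem.1 hα₀] with x hx
    exact continuousAt_ite_inner_nonneg hx (s x)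

end halfspace

theorem stmt_6_general {d : ℕ}
    (σ : Measure (EuclideanSpace ℝ (Fin d))) [IsProbabilityMeasure σ]
    (hσsphere : σ (Metric.sphere (0 : EuclideanSpace ℝ (Fin d)) 1)ᶜ = 0)
    (hσinv : ∀ R : EuclideanSpace ℝ (Fin d) ≃ₗᵢ[ℝ] EuclideanSpace ℝ (Fin d),
      Measure.map R σ = σ)
    (ν : Measure (EuclideanSpace ℝ (Fin d)))
    (hνσ : ν ≪ σ)
    (s : EuclideanSpace ℝ (Fin d) → ℝ) (hs : Integrable s ν) :
    ContinuousOn (fun α => ∫ x, (if 0 ≤ ⟪x, α⟫ then s x else 0) ∂ν)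
      (Metric.sphere (0 : EuclideanSpace ℝ (Fin d)) 1) ∧
    UniformContinuousOn (fun α => ∫ x, (if 0 ≤ ⟪x, α⟫ then s x else 0) ∂ν)
      (Metric.sphere (0 : EuclideanSpace ℝ (Fin d)) 1) := by
  have h0 : σ {0} = 0 := measure_mono_null (by simp) hσsphere
  have hcont : ContinuousOn (fun α => ∫ x, (if 0 ≤ ⟪x, α⟫ then s x else 0) ∂ν)
      (Metric.sphere (0 : EuclideanSpace ℝ (Fin d)) 1) := fun α hα =>
    have hplane : σ {x | ⟪x, α⟫ = 0} = 0 :=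
      measure_setOf_inner_eq_zero h0 hσinv (Metric.ne_of_mem_sphere hα one_ne_zero)
    (continuousAt_integral_ite_inner_nonneg hs (hνσ hplane)).continuousWithinAt
  exact ⟨hcont, (isCompact_sphere 0 1).uniformContinuousOn_of_continuous hcont⟩

/-- binary choice random coefficient model: if `ν ≪ σ` (σ the rotation-invariant
probability measure on the sphere) and `s ∈ L¹(ν)`, then
`b(α) = ∫ 1(⟨x,α⟩ ≥ 0) s(x) dν(x)` is continuous, hence uniformly continuous, on the sphere. -/
theorem stmt_6 {d : ℕ} (hd : 2 ≤ d)
    (σ : Measure (EuclideanSpace ℝ (Fin d))) [IsProbabilityMeasure σ]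
    (hσsphere : σ (Metric.sphere (0 : EuclideanSpace ℝ (Fin d)) 1)ᶜ = 0)
    (hσinv : ∀ R : EuclideanSpace ℝ (Fin d) ≃ₗᵢ[ℝ] EuclideanSpace ℝ (Fin d),
      Measure.map R σ = σ)
    (ν : Measure (EuclideanSpace ℝ (Fin d))) [IsFiniteMeasure ν]
    (hνσ : ν ≪ σ)
    (s : EuclideanSpace ℝ (Fin d) → ℝ) (hs : Integrable s ν) :
    ContinuousOn (fun α => ∫ x, (if 0 ≤ ⟪x, α⟫ then s x else 0) ∂ν)
      (Metric.sphere (0 : EuclideanSpace ℝ (Fin d)) 1) ∧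
    UniformContinuousOn (fun α => ∫ x, (if 0 ≤ ⟪x, α⟫ then s x else 0) ∂ν)
      (Metric.sphere (0 : EuclideanSpace ℝ (Fin d)) 1) :=
  stmt_6_general σ hσsphere hσinv ν hνσ s hs
end

section
/- Let d ≥ 2 and let σ be the rotation-invariant probability measure on the unit sphere S^{d−1} ⊆ ℝ^d. There is a constant C (one may take C = π/2, since the symmetric-difference measure equals θ/π where θ is the angle between α and α₀) such that for all α, α₀ ∈ S^{d−1}, σ( { x ∈ S^{d−1} : ⟨x,α⟩ ≥ 0 and ⟨x,α₀⟩ < 0 } ∪ { x ∈ S^{d−1} : ⟨x,α₀⟩ ≥ 0 and ⟨x,α⟩ < 0 } ) ≤ C · ‖α − α₀‖. -/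
/-!
Write `α₀ = cos θ • α + sin θ • β` with `β ⟂ α` a unit vector and `θ` the angle between `α` and
`α₀`. Rotations of the plane of `α, β` preserve `σ`, so the lunes between the hemispheres at
angles `k θ` and `(k + 1) θ` all have the measure `m` of the given one, and while `N θ < π` they
are pairwise disjoint, since `t ↦ ⟪x, cos t • α + sin t • β⟫` changes sign at most once on an
interval shorter than `π`. With `N = ⌈π / θ⌉ - 1` this gives `m ≤ 2 θ / π ≤ ‖α - α₀‖`, the last
step by Jordan's inequality.
-/

open MeasureTheory Set Real InnerProductGeometry
open scoped RealInnerProductSpace ENNReal symmDiff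

variable {E : Type*} [NormedAddCommGroup E] [InnerProductSpace ℝ E]

def halfspace (u : E) : Set E := {x | 0 ≤ ⟪x, u⟫}

lemma measurableSet_halfspace [MeasurableSpace E] [BorelSpace E] (u : E) :
    MeasurableSet (halfspace u) :=
  (isClosed_le continuous_const (continuous_id.inner continuous_const)).measurableSet

lemma LinearIsometryEquiv.preimage_symm_halfspace (R : E ≃ₗᵢ[ℝ] E) (u : E) :
    R.symm ⁻¹' halfspace u = halfspace (R u) := by
  ext x
  simp only [halfspace, mem_preimage, mem_ofPred_eq, R.symm.inner_map_eq_flip, R.symm_symm]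

lemma measure_halfspace_symmDiff_map [MeasurableSpace E] [BorelSpace E] {σ : Measure E}
    (hσ : ∀ R : E ≃ₗᵢ[ℝ] E, σ.map R = σ) (R : E ≃ₗᵢ[ℝ] E) (u v : E) :
    σ (halfspace (R u) ∆ halfspace (R v)) = σ (halfspace u ∆ halfspace v) := by
  have hmeas := (measurableSet_halfspace u).symmDiff (measurableSet_halfspace v)
  rw [← R.preimage_symm_halfspace, ← R.preimage_symm_halfspace, ← preimage_symmDiff,
    ← Measure.map_apply R.symm.continuous.measurable hmeas, hσ]

noncomputable def greatCircle (α β : E) (t : ℝ) : E := cos t • α + sin t • β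

@[simp] lemma greatCircle_zero (α β : E) : greatCircle α β 0 = α := by
  simp [greatCircle]

lemma sin_sub_smul_greatCircle_add_sin_sub_smul (α β : E) (t₁ t₂ t₃ : ℝ) :
    sin (t₃ - t₂) • greatCircle α β t₁ + sin (t₂ - t₁) • greatCircle α β t₃ =
      sin (t₃ - t₁) • greatCircle α β t₂ := by
  simp only [greatCircle, sin_sub, smul_add, smul_smul]
  match_scalars <;> ring

lemma mem_halfspace_greatCircle_iff_of_lt {α β x : E} {t₁ t₂ t₃ : ℝ} (h₁₂ : t₁ < t₂)
    (h₂₃ : t₂ < t₃) (h₁₃ : t₃ - t₁ < π)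
    (h : x ∈ halfspace (greatCircle α β t₁) ↔ x ∈ halfspace (greatCircle α β t₃)) :
    x ∈ halfspace (greatCircle α β t₁) ↔ x ∈ halfspace (greatCircle α β t₂) := by
  have hinner := congrArg (⟪x, ·⟫) (sin_sub_smul_greatCircle_add_sin_sub_smul α β t₁ t₂ t₃)
  simp only [inner_add_right, real_inner_smul_right] at hinner
  have s₂₁ : 0 < sin (t₂ - t₁) := sin_pos_of_pos_of_lt_pi (by linarith) (by linarith)
  have s₃₂ : 0 < sin (t₃ - t₂) := sin_pos_of_pos_of_lt_pi (by linarith) (by linarith)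
  have s₃₁ : 0 < sin (t₃ - t₁) := sin_pos_of_pos_of_lt_pi (by linarith) (by linarith)
  simp only [halfspace, mem_ofPred_eq] at h ⊢
  by_cases h₁ : 0 ≤ ⟪x, greatCircle α β t₁⟫
  · have h₃ := h.mp h₁
    exact iff_of_true h₁ (nonneg_of_mul_nonneg_right (by nlinarith) s₃₁)
  · have h₃ : ⟪x, greatCircle α β t₃⟫ < 0 := not_le.mp (mt h.mpr h₁)
    exact iff_of_false h₁ (not_le.mpr (neg_of_mul_neg_right (by nlinarith) s₃₁.le))

lemma disjoint_halfspace_symmDiff_greatCircle {α β : E} {t₁ t₂ t₃ t₄ : ℝ} (h₁₂ : t₁ < t₂)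
    (h₂₃ : t₂ ≤ t₃) (h₃₄ : t₃ < t₄) (h₁₄ : t₄ - t₁ < π) :
    Disjoint (halfspace (greatCircle α β t₁) ∆ halfspace (greatCircle α β t₂))
      (halfspace (greatCircle α β t₃) ∆ halfspace (greatCircle α β t₄)) := by
  rw [Set.disjoint_left]
  intro x hx₁₂ hx₃₄
  have h₁₂₄ := mem_halfspace_greatCircle_iff_of_lt (α := α) (β := β) (x := x) h₁₂
    (h₂₃.trans_lt h₃₄) h₁₄
  rw [mem_symmDiff] at hx₁₂ hx₃₄
  rcases h₂₃.lt_or_eq with h₂₃ | rfl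
  · have h₁₂₃ := mem_halfspace_greatCircle_iff_of_lt (α := α) (β := β) (x := x) h₁₂ h₂₃
      (by linarith)
    generalize (x ∈ halfspace (greatCircle α β t₁)) = p₁ at *
    generalize (x ∈ halfspace (greatCircle α β t₂)) = p₂ at *
    generalize (x ∈ halfspace (greatCircle α β t₃)) = p₃ at *
    generalize (x ∈ halfspace (greatCircle α β t₄)) = p₄ at *
    tauto
  · generalize (x ∈ halfspace (greatCircle α β t₁)) = p₁ at *
    generalize (x ∈ halfspace (greatCircle α β t₂)) = p₂ at *
    generalize (x ∈ halfspace (greatCircle α β t₄)) = p₄ at *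
    tauto

section Orthonormal

variable {α β : E} (hα : ‖α‖ = 1) (hβ : ‖β‖ = 1) (hαβ : ⟪α, β⟫ = 0)
include hα hβ hαβ

lemma inner_greatCircle_greatCircle (s t : ℝ) :
    ⟪greatCircle α β s, greatCircle α β t⟫ = cos (t - s) := by
  have hβα : ⟪β, α⟫ = 0 := by rw [real_inner_comm]; exact hαβ
  simp only [greatCircle, inner_add_left, inner_add_right, real_inner_smul_left,
    real_inner_smul_right, real_inner_self_eq_norm_sq, hα, hβ, hαβ, hβα, cos_sub]
  ring

lemma norm_greatCircle (t : ℝ) : ‖greatCircle α β t‖ = 1 := by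
  have h := inner_greatCircle_greatCircle hα hβ hαβ t t
  rwa [sub_self, cos_zero, real_inner_self_eq_norm_sq,
    pow_eq_one_iff_of_nonneg (norm_nonneg _) two_ne_zero] at h

lemma reflection_greatCircle (s t : ℝ) :
    (ℝ ∙ greatCircle α β s).reflection (greatCircle α β t) = greatCircle α β (2 * s - t) := by
  rw [Submodule.reflection_apply, Submodule.starProjection_singleton,
    norm_greatCircle hα hβ hαβ, inner_greatCircle_greatCircle hα hβ hαβ]
  simp only [greatCircle, show 2 * s - t = s - (t - s) by ring, cos_sub, sin_sub]
  match_scalars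
  · linear_combination cos t * sin_sq_add_cos_sq s
  · linear_combination sin t * sin_sq_add_cos_sq s

lemma exists_linearIsometryEquiv_greatCircle_add (s : ℝ) :
    ∃ R : E ≃ₗᵢ[ℝ] E, ∀ t, R (greatCircle α β t) = greatCircle α β (s + t) := by
  refine ⟨(ℝ ∙ greatCircle α β 0).reflection.trans (ℝ ∙ greatCircle α β (s / 2)).reflection,
    fun t => ?_⟩
  rw [LinearIsometryEquiv.trans_apply, reflection_greatCircle hα hβ hαβ,
    reflection_greatCircle hα hβ hαβ]
  ring_nf

end Orthonormal

section Packing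

variable [MeasurableSpace E] [BorelSpace E] {σ : Measure E}
  (hσ : ∀ R : E ≃ₗᵢ[ℝ] E, σ.map R = σ) {α β : E} (hα : ‖α‖ = 1) (hβ : ‖β‖ = 1)
  (hαβ : ⟪α, β⟫ = 0)
include hσ hα hβ hαβ

lemma measure_halfspace_symmDiff_greatCircle_natCast_mul (θ : ℝ) (k : ℕ) :
    σ (halfspace (greatCircle α β (k * θ)) ∆ halfspace (greatCircle α β ((k + 1) * θ))) =
      σ (halfspace α ∆ halfspace (greatCircle α β θ)) := by
  obtain ⟨R, hR⟩ := exists_linearIsometryEquiv_greatCircle_add hα hβ hαβ (k * θ)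
  have h₀ := hR 0
  rw [add_zero, greatCircle_zero] at h₀
  rw [← h₀, add_one_mul, ← hR, measure_halfspace_symmDiff_map hσ]

lemma natCast_mul_measureReal_halfspace_symmDiff_le [IsFiniteMeasure σ] {θ : ℝ} (hθ : 0 < θ)
    {N : ℕ} (hN : N * θ < π) :
    N * σ.real (halfspace α ∆ halfspace (greatCircle α β θ)) ≤ σ.real univ := by
  set L : ℕ → Set E := fun k =>
    halfspace (greatCircle α β (k * θ)) ∆ halfspace (greatCircle α β ((k + 1) * θ))
  have hdisj_of_lt : ∀ {j k : ℕ}, j < k → k < N → Disjoint (L j) (L k) := by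
    intro j k hjk hkN
    have hjk' : (j : ℝ) + 1 ≤ k := by exact_mod_cast hjk
    have hkN' : (k : ℝ) + 1 ≤ N := by exact_mod_cast hkN
    exact disjoint_halfspace_symmDiff_greatCircle (by nlinarith) (by nlinarith) (by nlinarith)
      (by nlinarith)
  have hdisj : (Finset.range N : Set ℕ).PairwiseDisjoint L := by
    intro j hj k hk hjk
    simp only [Finset.coe_range, mem_Iio] at hj hk
    rcases hjk.lt_or_gt with hlt | hlt
    · exact hdisj_of_lt hlt hk
    · exact (hdisj_of_lt hlt hj).symm
  have hmeas : ∀ k ∈ Finset.range N, MeasurableSet (L k) := fun k _ =>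
    (measurableSet_halfspace _).symmDiff (measurableSet_halfspace _)
  calc N * σ.real (halfspace α ∆ halfspace (greatCircle α β θ))
      = ∑ k ∈ Finset.range N, σ.real (L k) := by
        simp [L, measureReal_def, measure_halfspace_symmDiff_greatCircle_natCast_mul hσ hα hβ hαβ]
    _ = σ.real (⋃ k ∈ Finset.range N, L k) := (measureReal_biUnion_finset hdisj hmeas).symm
    _ ≤ σ.real univ := measureReal_mono (subset_univ _)

lemma measureReal_halfspace_symmDiff_greatCircle_le [IsProbabilityMeasure σ] {θ : ℝ}
    (hθ : 0 < θ) :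
    σ.real (halfspace α ∆ halfspace (greatCircle α β θ)) ≤ 2 / π * θ := by
  set m := σ.real (halfspace α ∆ halfspace (greatCircle α β θ))
  set N := ⌈π / θ⌉₊ - 1
  have hceil : 0 < ⌈π / θ⌉₊ := Nat.ceil_pos.mpr (by positivity)
  have hNlt : (N : ℝ) < π / θ := Nat.lt_ceil.mp (by omega)
  have hle : π / θ ≤ N + 1 := by
    rw [← Nat.cast_add_one, Nat.sub_add_cancel hceil]
    exact Nat.le_ceil _
  have hpack := natCast_mul_measureReal_halfspace_symmDiff_le hσ hα hβ hαβ hθ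
    (N := N) (by rwa [lt_div_iff₀ hθ] at hNlt)
  rw [probReal_univ] at hpack
  have hm0 : 0 ≤ m := measureReal_nonneg
  have hm1 : m ≤ 1 := measureReal_le_one
  have hπ : π ≤ (N + 1) * θ := by rwa [div_le_iff₀ hθ] at hle
  rw [div_mul_eq_mul_div, le_div_iff₀ pi_pos]
  nlinarith

end Packing

lemma two_div_pi_mul_angle_le_norm_sub {x y : E} (hx : ‖x‖ = 1) (hy : ‖y‖ = 1) :
    2 / π * angle x y ≤ ‖x - y‖ := by
  have hcos := norm_sub_sq_eq_norm_sq_add_norm_sq_sub_two_mul_norm_mul_norm_mul_cos_angle x y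
  rw [hx, hy] at hcos
  set θ := angle x y
  have hθ : 0 ≤ θ := angle_nonneg x y
  have hsin : 2 / π * (θ / 2) ≤ sin (θ / 2) :=
    mul_le_sin (by linarith) (by linarith [angle_le_pi x y])
  have hchord : ‖x - y‖ ^ 2 = (2 * sin (θ / 2)) ^ 2 := by
    rw [show θ = 2 * (θ / 2) by ring, cos_two_mul_eq_one_sub] at hcos
    linear_combination hcos
  rw [← abs_of_nonneg (by positivity : 0 ≤ 2 / π * θ), ← abs_norm]
  exact sq_le_sq.mp (by rw [hchord]; exact pow_le_pow_left₀ (by positivity) (by linarith) 2)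

lemma exists_greatCircle_angle_eq {α α₀ : E} (hα : ‖α‖ = 1) (hα₀ : ‖α₀‖ = 1)
    (hsin : 0 < sin (angle α α₀)) :
    ∃ β : E, ‖β‖ = 1 ∧ ⟪α, β⟫ = 0 ∧ greatCircle α β (angle α α₀) = α₀ := by
  set θ := angle α α₀
  have hcos : cos θ = ⟪α, α₀⟫ := by simp [θ, cos_angle, hα, hα₀]
  have hw : ‖α₀ - cos θ • α‖ = sin θ := by
    rw [← sqrt_sq hsin.le, sin_sq, ← sqrt_sq (norm_nonneg _), norm_sub_sq_real, norm_smul,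
      real_inner_smul_right, real_inner_comm, ← hcos, hα, hα₀, norm_eq_abs, mul_pow, sq_abs]
    ring_nf
  refine ⟨(sin θ)⁻¹ • (α₀ - cos θ • α), ?_, ?_, ?_⟩
  · rw [norm_smul, norm_inv, norm_eq_abs, abs_of_pos hsin, hw, inv_mul_cancel₀ hsin.ne']
  · simp [inner_sub_right, real_inner_smul_right, hα, hcos]
  · simp only [greatCircle, smul_smul, mul_inv_cancel₀ hsin.ne', one_smul]
    abel

section Bound

variable [MeasurableSpace E] [BorelSpace E] {σ : Measure E} [IsProbabilityMeasure σ]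

lemma measureReal_halfspace_symmDiff_le_norm_sub (hσ : ∀ R : E ≃ₗᵢ[ℝ] E, σ.map R = σ)
    {α α₀ : E} (hα : ‖α‖ = 1) (hα₀ : ‖α₀‖ = 1) :
    σ.real (halfspace α ∆ halfspace α₀) ≤ ‖α - α₀‖ := by
  refine le_trans ?_ (two_div_pi_mul_angle_le_norm_sub hα hα₀)
  rcases (angle_le_pi α α₀).eq_or_lt with hπ | hπ
  · rw [hπ, div_mul_cancel₀ _ pi_ne_zero]
    linarith [measureReal_le_one (μ := σ) (s := halfspace α ∆ halfspace α₀)]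
  rcases (angle_nonneg α α₀).eq_or_lt with h0 | h0
  · have hαα₀ : α = α₀ := by
      rw [← inner_eq_one_iff_of_norm_eq_one (𝕜 := ℝ) hα hα₀, ← cos_angle_mul_norm_mul_norm,
        ← h0]
      simp [hα, hα₀]
    rw [hαα₀, symmDiff_self, bot_eq_empty, measureReal_empty]
    exact mul_nonneg (by positivity) (angle_nonneg _ _)
  obtain ⟨β, hβ, hαβ, hβα₀⟩ := exists_greatCircle_angle_eq hα hα₀ (sin_pos_of_pos_of_lt_pi h0 hπ)
  simpa only [hβα₀] using measureReal_halfspace_symmDiff_greatCircle_le hσ hα hβ hαβ h0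

end Bound

theorem stmt_18_general {d : ℕ}
    (σ : Measure (EuclideanSpace ℝ (Fin d))) [IsProbabilityMeasure σ]
    (hσinv : ∀ R : EuclideanSpace ℝ (Fin d) ≃ₗᵢ[ℝ] EuclideanSpace ℝ (Fin d),
      Measure.map R σ = σ) :
    ∃ C : ℝ, ∀ α ∈ Metric.sphere (0 : EuclideanSpace ℝ (Fin d)) 1,
      ∀ α₀ ∈ Metric.sphere (0 : EuclideanSpace ℝ (Fin d)) 1,
      σ ({x ∈ Metric.sphere (0 : EuclideanSpace ℝ (Fin d)) 1 |
            0 ≤ ⟪x, α⟫ ∧ ⟪x, α₀⟫ < 0} ∪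
          {x ∈ Metric.sphere (0 : EuclideanSpace ℝ (Fin d)) 1 |
            0 ≤ ⟪x, α₀⟫ ∧ ⟪x, α⟫ < 0}) ≤ ENNReal.ofReal (C * ‖α - α₀‖) := by
  refine ⟨1, fun α hα α₀ hα₀ => ?_⟩
  rw [mem_sphere_zero_iff_norm] at hα hα₀
  calc σ _ ≤ σ (halfspace α ∆ halfspace α₀) := by
        refine measure_mono ?_
        rintro x (⟨-, h, h₀⟩ | ⟨-, h₀, h⟩)
        · exact Or.inl ⟨h, h₀.not_ge⟩
        · exact Or.inr ⟨h₀, h.not_ge⟩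
    _ = ENNReal.ofReal (σ.real (halfspace α ∆ halfspace α₀)) :=
        (ofReal_measureReal (by finiteness)).symm
    _ ≤ ENNReal.ofReal (1 * ‖α - α₀‖) := by
        rw [one_mul]
        exact ENNReal.ofReal_le_ofReal (measureReal_halfspace_symmDiff_le_norm_sub hσinv hα hα₀)

/-- the symmetric difference of the hemispheres determined by `α` and `α₀`
has uniform spherical measure of order `‖α − α₀‖` (one may take `C = π/2`, since the
symmetric-difference measure equals `θ/π` with `θ` the angle between `α` and `α₀`). -/
theorem stmt_18 {d : ℕ} (hd : 2 ≤ d)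
    (σ : Measure (EuclideanSpace ℝ (Fin d))) [IsProbabilityMeasure σ]
    (hσsphere : σ (Metric.sphere (0 : EuclideanSpace ℝ (Fin d)) 1)ᶜ = 0)
    (hσinv : ∀ R : EuclideanSpace ℝ (Fin d) ≃ₗᵢ[ℝ] EuclideanSpace ℝ (Fin d),
      Measure.map R σ = σ) :
    ∃ C : ℝ, ∀ α ∈ Metric.sphere (0 : EuclideanSpace ℝ (Fin d)) 1,
      ∀ α₀ ∈ Metric.sphere (0 : EuclideanSpace ℝ (Fin d)) 1,
      σ ({x ∈ Metric.sphere (0 : EuclideanSpace ℝ (Fin d)) 1 |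
            0 ≤ ⟪x, α⟫ ∧ ⟪x, α₀⟫ < 0} ∪
          {x ∈ Metric.sphere (0 : EuclideanSpace ℝ (Fin d)) 1 |
            0 ≤ ⟪x, α₀⟫ ∧ ⟪x, α⟫ < 0}) ≤ ENNReal.ofReal (C * ‖α - α₀‖) :=
  stmt_18_general σ hσinv
end
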